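/- Let U ⊆ ℝⁿ be open, let g : U → (symmetric invertible n×n real matrices) be a differentiable metric field, and fix an index k with 0 ≤ k < n. Assume that ∂_k g_{μν} = 0 on U for all μ, ν (the metric is independent of the k-th coordinate) and that g_{kk} > 0 on U. Define the vector field v^μ = δ^μ_k / √(g_{kk}). Then: (i) Σ_{μ,ν} g_{μν} v^μ v^ν = 1; and (ii) the acceleration a_μ = Σ_ν v^ν (∂_ν v_μ − Σ_ε Γ^ε_{μν} v_ε) satisfies a_μ = ∂_μ Ψ with Ψ = −(1/2) ln(g_{kk}); that is, a_μ = −(∂_μ g_{kk})/(2 g_{kk}). -/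

import Mathlib

/-!
Only `ν = k` contributes to `a_μ`, with weight `v^k = 1/√g_{kk}`. Since `g` does not depend on
`x^k`, neither does `v_μ = g_{μk}/√g_{kk}`, and contracting `Γ^ε_{μk}` with `v_ε` lowers it to
the first-kind symbol `½(∂_k g_{kμ} + ∂_μ g_{kk} − ∂_k g_{μk}) / √g_{kk} = ½ ∂_μ g_{kk} / √g_{kk}`.
Hence `a_μ = −∂_μ g_{kk} / (2 g_{kk}) = ∂_μ(−½ ln g_{kk})`.
-/

open scoped BigOperators

/-- Partial derivative with respect to the μ-th coordinate of ℝⁿ. -/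
noncomputable def pd {n : ℕ} (μ : Fin n) (f : (Fin n → ℝ) → ℝ) (x : Fin n → ℝ) : ℝ :=
  fderiv ℝ f x (Pi.single μ 1)

/-- Christoffel symbols `Γ^ε_{μν}` of a metric field `g`. -/
noncomputable def christoffel {n : ℕ} (g : (Fin n → ℝ) → Matrix (Fin n) (Fin n) ℝ)
    (ε μ ν : Fin n) (x : Fin n → ℝ) : ℝ :=
  (1 / 2) * ∑ α, (g x)⁻¹ ε α *
    (pd ν (fun y => g y α μ) x + pd μ (fun y => g y α ν) x - pd α (fun y => g y μ ν) x)

/-- Covariant components `v_μ = g_{μν} v^ν` of a vector field. -/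
noncomputable def vlow {n : ℕ} (g : (Fin n → ℝ) → Matrix (Fin n) (Fin n) ℝ)
    (v : (Fin n → ℝ) → Fin n → ℝ) (μ : Fin n) (x : Fin n → ℝ) : ℝ :=
  ∑ ν, g x μ ν * v x ν

/-- Acceleration covector `a_μ = v^ν (∂_ν v_μ − Γ^ε_{μν} v_ε)` of a vector field. -/
noncomputable def accel {n : ℕ} (g : (Fin n → ℝ) → Matrix (Fin n) (Fin n) ℝ)
    (v : (Fin n → ℝ) → Fin n → ℝ) (μ : Fin n) (x : Fin n → ℝ) : ℝ :=
  ∑ ν, v x ν * (pd ν (vlow g v μ) x - ∑ ε, christoffel g ε μ ν x * vlow g v ε x)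

/-- The observer field `v^μ = δ^μ_k / √(g_{kk})` along the k-th coordinate direction. -/
noncomputable def vobs {n : ℕ} (g : (Fin n → ℝ) → Matrix (Fin n) (Fin n) ℝ)
    (k : Fin n) (x : Fin n → ℝ) (μ : Fin n) : ℝ :=
  (if μ = k then 1 else 0) / Real.sqrt (g x k k)

section PartialDerivative

variable {n : ℕ} {μ : Fin n} {f h : (Fin n → ℝ) → ℝ} {x : Fin n → ℝ}

theorem pd_mul (hf : DifferentiableAt ℝ f x) (hh : DifferentiableAt ℝ h x) :
    pd μ (fun y => f y * h y) x = f x * pd μ h x + h x * pd μ f x := by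
  simp [pd, fderiv_fun_mul hf hh]

theorem pd_comp {φ : ℝ → ℝ} {φ' : ℝ} (hφ : HasDerivAt φ φ' (f x))
    (hf : DifferentiableAt ℝ f x) : pd μ (fun y => φ (f y)) x = φ' * pd μ f x := by
  rw [pd, pd, show (fun y => φ (f y)) = φ ∘ f from rfl,
    (hφ.comp_hasFDerivAt x hf.hasFDerivAt).fderiv]
  simp

end PartialDerivative

section Metric

variable {n : ℕ} {g : (Fin n → ℝ) → Matrix (Fin n) (Fin n) ℝ} {x : Fin n → ℝ}

theorem sum_inv_mul_of_isSymm (hsymm : (g x).IsSymm) (hinv : IsUnit (g x).det) (α β : Fin n) :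
    ∑ ε, (g x)⁻¹ ε α * g x ε β = if α = β then 1 else 0 := by
  have hinvT : (g x)⁻¹.transpose = (g x)⁻¹ := by rw [Matrix.transpose_nonsing_inv, hsymm.eq]
  calc ∑ ε, (g x)⁻¹ ε α * g x ε β = ((g x)⁻¹.transpose * g x) α β := by simp [Matrix.mul_apply]
    _ = if α = β then 1 else 0 := by rw [hinvT, Matrix.nonsing_inv_mul _ hinv, Matrix.one_apply]

theorem sum_christoffel_mul (hsymm : (g x).IsSymm) (hinv : IsUnit (g x).det) (μ ν β : Fin n) :
    ∑ ε, christoffel g ε μ ν x * g x ε β = (1 / 2) *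
      (pd ν (fun y => g y β μ) x + pd μ (fun y => g y β ν) x - pd β (fun y => g y μ ν) x) := by
  set D : Fin n → ℝ := fun α =>
    pd ν (fun y => g y α μ) x + pd μ (fun y => g y α ν) x - pd α (fun y => g y μ ν) x
  calc ∑ ε, christoffel g ε μ ν x * g x ε β
      = (1 / 2) * ∑ α, D α * ∑ ε, (g x)⁻¹ ε α * g x ε β := by
        simp only [christoffel, Finset.mul_sum, Finset.sum_mul]
        rw [Finset.sum_comm]
        exact Finset.sum_congr rfl fun α _ => Finset.sum_congr rfl fun ε _ => by ring
    _ = (1 / 2) * D β := by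
        simp [sum_inv_mul_of_isSymm hsymm hinv, mul_ite]

end Metric

section Observer

variable {n : ℕ} {g : (Fin n → ℝ) → Matrix (Fin n) (Fin n) ℝ} {k : Fin n} {x : Fin n → ℝ}

theorem vobs_eq_ite (μ : Fin n) : vobs g k x μ = if μ = k then (√(g x k k))⁻¹ else 0 := by
  simp [vobs, div_eq_mul_inv]

theorem vlow_vobs (μ : Fin n) : vlow g (vobs g k) μ = fun y => g y μ k * (√(g y k k))⁻¹ := by
  funext y
  simp [vlow, vobs_eq_ite, mul_ite]

theorem sum_metric_vobs_vobs (hpos : 0 < g x k k) :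
    ∑ μ, ∑ ν, g x μ ν * vobs g k x μ * vobs g k x ν = 1 := by
  simp only [vobs_eq_ite, mul_ite, ite_mul, mul_zero, zero_mul, Finset.sum_ite_eq',
    Finset.mem_univ, if_true]
  rw [mul_assoc, ← mul_inv, Real.mul_self_sqrt hpos.le, mul_inv_cancel₀ hpos.ne']

theorem pd_vlow_vobs_self (hdiff : ∀ μ ν : Fin n, DifferentiableAt ℝ (fun y => g y μ ν) x)
    (hindep : ∀ μ ν : Fin n, pd k (fun y => g y μ ν) x = 0) (hpos : 0 < g x k k) (μ : Fin n) :
    pd k (vlow g (vobs g k) μ) x = 0 := by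
  have hφ : HasDerivAt (fun t => (√t)⁻¹) (-(√(g x k k) ^ 2)⁻¹ * (1 / (2 * √(g x k k))))
      (g x k k) :=
    (hasDerivAt_inv (Real.sqrt_pos.2 hpos).ne').comp _ (Real.hasDerivAt_sqrt hpos.ne')
  have hinvsqrt : DifferentiableAt ℝ (fun y => (√(g y k k))⁻¹) x :=
    ((hdiff k k).sqrt hpos.ne').inv (Real.sqrt_pos.2 hpos).ne'
  rw [vlow_vobs, pd_mul (hdiff μ k) hinvsqrt,
    pd_comp hφ (hdiff k k), hindep, hindep]
  ring

theorem accel_vobs (hdiff : ∀ μ ν : Fin n, DifferentiableAt ℝ (fun y => g y μ ν) x)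
    (hsymm : (g x).IsSymm) (hinv : IsUnit (g x).det)
    (hindep : ∀ μ ν : Fin n, pd k (fun y => g y μ ν) x = 0) (hpos : 0 < g x k k) (μ : Fin n) :
    accel g (vobs g k) μ x = -(pd μ (fun y => g y k k) x) / (2 * g x k k) := by
  have hΓ : ∑ ε, christoffel g ε μ k x * vlow g (vobs g k) ε x
      = (1 / 2) * pd μ (fun y => g y k k) x * (√(g x k k))⁻¹ := by
    simp only [vlow_vobs, ← mul_assoc, ← Finset.sum_mul, sum_christoffel_mul hsymm hinv,
      hindep]
    ring
  simp only [accel, vobs_eq_ite, ite_mul, zero_mul, Finset.sum_ite_eq', Finset.mem_univ, if_true,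
    pd_vlow_vobs_self hdiff hindep hpos, hΓ]
  have hs : (√(g x k k))⁻¹ * (√(g x k k))⁻¹ = (g x k k)⁻¹ := by
    rw [← mul_inv, Real.mul_self_sqrt hpos.le]
  linear_combination (-(1 / 2) * pd μ (fun y => g y k k) x) * hs

end Observer

theorem coordinate_observer_gradient_acceleration_general
    (n : ℕ) (U : Set (Fin n → ℝ))
    (g : (Fin n → ℝ) → Matrix (Fin n) (Fin n) ℝ)
    (hdiff : ∀ x ∈ U, ∀ μ ν : Fin n, DifferentiableAt ℝ (fun y => g y μ ν) x)
    (hsymm : ∀ x ∈ U, (g x).IsSymm)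
    (hinv : ∀ x ∈ U, IsUnit (g x).det)
    (k : Fin n)
    (hindep : ∀ x ∈ U, ∀ μ ν : Fin n, pd k (fun y => g y μ ν) x = 0)
    (hpos : ∀ x ∈ U, 0 < g x k k) :
    ∀ x ∈ U,
      (∑ μ, ∑ ν, g x μ ν * vobs g k x μ * vobs g k x ν = 1) ∧
      (∀ μ : Fin n, accel g (vobs g k) μ x
          = pd μ (fun y => -(1 / 2) * Real.log (g y k k)) x) ∧
      (∀ μ : Fin n, accel g (vobs g k) μ x
          = -(pd μ (fun y => g y k k) x) / (2 * g x k k)) := by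
  intro x hx
  have haccel := accel_vobs (hdiff x hx) (hsymm x hx) (hinv x hx) (hindep x hx) (hpos x hx)
  refine ⟨sum_metric_vobs_vobs (hpos x hx), fun μ => ?_, haccel⟩
  have hlog : HasDerivAt (fun t => -(1 / 2) * Real.log t) (-(1 / 2) * (g x k k)⁻¹) (g x k k) :=
    (Real.hasDerivAt_log (hpos x hx).ne').const_mul _
  rw [haccel, pd_comp hlog (hdiff x hx k k)]
  field_simp

/-- An observer along a metric-preserving coordinate direction `k` is unit-normalized and
has gradient acceleration `a_μ = ∂_μ(−(1/2) ln g_{kk}) = −∂_μ g_{kk}/(2 g_{kk})`. -/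
theorem coordinate_observer_gradient_acceleration
    (n : ℕ) (hn : 1 ≤ n) (U : Set (Fin n → ℝ)) (hUopen : IsOpen U)
    (g : (Fin n → ℝ) → Matrix (Fin n) (Fin n) ℝ)
    (hdiff : ∀ x ∈ U, ∀ μ ν : Fin n, DifferentiableAt ℝ (fun y => g y μ ν) x)
    (hsymm : ∀ x ∈ U, (g x).IsSymm)
    (hinv : ∀ x ∈ U, IsUnit (g x).det)
    (k : Fin n)
    (hindep : ∀ x ∈ U, ∀ μ ν : Fin n, pd k (fun y => g y μ ν) x = 0)
    (hpos : ∀ x ∈ U, 0 < g x k k) :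
    ∀ x ∈ U,
      (∑ μ, ∑ ν, g x μ ν * vobs g k x μ * vobs g k x ν = 1) ∧
      (∀ μ : Fin n, accel g (vobs g k) μ x
          = pd μ (fun y => -(1 / 2) * Real.log (g y k k)) x) ∧
      (∀ μ : Fin n, accel g (vobs g k) μ x
          = -(pd μ (fun y => g y k k) x) / (2 * g x k k)) :=
  coordinate_observer_gradient_acceleration_general n U g hdiff hsymm hinv k hindep hpos
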